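/- arXiv:2112.13057 — 4 statements merged into one kernel-verified Lean document; each statement's English description precedes it below -/
import Mathlib

section
/- Let ν be a norm on ℝ^d, t in the polar set of ν, δ ∈ (0, 1/2), and K > 0. Let y_1, …, y_m ∈ ℝ^d with ν(y_i) ≥ K for all i, such that y_1, …, y_{l1} ∈ Y_{t,δ} and y_{l1+1}, …, y_m ∉ Y_{t,δ} (so m = l1 + l2). Suppose l1 ≥ l2 and t·(∑_{i=1}^m y_i) < (K/8)·m. Then ∑_{i=1}^m s_t(y_i) ≥ (K/8)·m. -/
open scoped RealInnerProductSpace BigOperators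

theorem surcharge_sum_reordered_case_general {d m : ℕ}
    (ν : Seminorm ℝ (EuclideanSpace ℝ (Fin d)))
    (t : EuclideanSpace ℝ (Fin d))
    (K : ℝ) (hK : 0 < K)
    (y : Fin m → EuclideanSpace ℝ (Fin d))
    (hKν : ∀ i, K ≤ ν (y i))
    (hsum : ⟪t, ∑ i, y i⟫ < K / 8 * m) :
    K / 8 * m ≤ ∑ i, (ν (y i) - ⟪t, y i⟫) := by
  have hν_sum : K * m ≤ ∑ i, ν (y i) := by
    simpa [mul_comm] using Finset.card_nsmul_le_sum Finset.univ (fun i => ν (y i)) K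
      (fun i _ => hKν i)
  have hKm : 0 ≤ K * m := by positivity
  calc K / 8 * m ≤ K * m - K / 8 * m := by linarith
    _ ≤ ∑ i, ν (y i) - ⟪t, ∑ i, y i⟫ := sub_le_sub hν_sum hsum.le
    _ = ∑ i, (ν (y i) - ⟪t, y i⟫) := by rw [Finset.sum_sub_distrib, inner_sum]

/-- if the first `l1` increments lie in the cone `Y_{t,δ}`, the
remaining `l2 = m - l1` do not, `l1 ≥ l2`, each increment has `ν`-length at
least `K`, and `t·(∑ y_i) < (K/8)m`, then `∑ s_t(y_i) ≥ (K/8)m`. -/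
theorem surcharge_sum_reordered_case {d m : ℕ}
    (ν : Seminorm ℝ (EuclideanSpace ℝ (Fin d)))
    (t : EuclideanSpace ℝ (Fin d))
    (ht : ∀ y, ⟪t, y⟫ ≤ ν y)
    (δ K : ℝ) (hδ0 : 0 < δ) (hδ : δ < 1 / 2) (hK : 0 < K)
    (l1 l2 : ℕ) (hm : m = l1 + l2) (hl : l2 ≤ l1)
    (y : Fin m → EuclideanSpace ℝ (Fin d))
    (hKν : ∀ i, K ≤ ν (y i))
    (hin : ∀ i : Fin m, (i : ℕ) < l1 → (1 - δ) * ν (y i) ≤ ⟪t, y i⟫)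
    (hout : ∀ i : Fin m, l1 ≤ (i : ℕ) → ¬ ((1 - δ) * ν (y i) ≤ ⟪t, y i⟫))
    (hsum : ⟪t, ∑ i, y i⟫ < K / 8 * m) :
    K / 8 * m ≤ ∑ i, (ν (y i) - ⟪t, y i⟫) :=
  surcharge_sum_reordered_case_general ν t K hK y hKν hsum
end

section
/- Let ν be a norm on ℝ^2 (or ℝ^d) and η another norm with unit balls satisfying U_η ⊆ U_ν. Suppose s', s'' ∈ 𝕊^{d−1} and t ∈ ℝ^d are such that ν(s') = t·s' = η(s') and ν(s'') = t·s'' = η(s''), and suppose s ∈ 𝕊^{d−1} is such that s/ν(s) lies on the line segment [s'/ν(s'), s''/ν(s'')]. Then ν(s) = η(s). -/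
open scoped RealInnerProductSpace BigOperators

/-- if `U_η ⊆ U_ν`, `t` is in the polar set of `ν`, the unit
vectors `s'`, `s''` satisfy `ν = t·(·) = η` at `s'` and `s''`, and `s/ν(s)`
lies on the segment `[s'/ν(s'), s''/ν(s'')]`, then `ν(s) = η(s)`. -/
theorem saturation_on_facet {d : ℕ}
    (ν η : Seminorm ℝ (EuclideanSpace ℝ (Fin d)))
    (hball : ∀ x : EuclideanSpace ℝ (Fin d), η x ≤ 1 → ν x ≤ 1)
    (t s' s'' s : EuclideanSpace ℝ (Fin d))
    (hs' : ‖s'‖ = 1) (hs'' : ‖s''‖ = 1) (hs : ‖s‖ = 1)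
    (ht : ∀ y, ⟪t, y⟫ ≤ ν y)
    (h1 : ν s' = ⟪t, s'⟫) (h1' : η s' = ν s')
    (h2 : ν s'' = ⟪t, s''⟫) (h2' : η s'' = ν s'')
    (hpos' : 0 < ν s') (hpos'' : 0 < ν s'') (hpos : 0 < ν s)
    (lam : ℝ) (hlam0 : 0 ≤ lam) (hlam1 : lam ≤ 1)
    (hseg : (ν s)⁻¹ • s =
      lam • ((ν s')⁻¹ • s') + (1 - lam) • ((ν s'')⁻¹ • s'')) :
    ν s = η s := by
  have hle : ∀ x, ν x ≤ η x := by
    intro x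
    rcases eq_or_lt_of_le (apply_nonneg η x) with h0 | h0
    · by_contra hlt
      push_neg at hlt
      have hνx : 0 < ν x := lt_of_le_of_lt (le_of_eq (by rw [← h0])) hlt
      have h2x := hball ((2 * (ν x)⁻¹) • x) (by
        rw [map_smul_eq_mul, ← h0, mul_zero]; norm_num)
      rw [map_smul_eq_mul, Real.norm_eq_abs, abs_of_pos (by positivity),
        mul_assoc, inv_mul_cancel₀ hνx.ne', mul_one] at h2x
      linarith
    · have h := hball ((η x)⁻¹ • x) (by
        rw [map_smul_eq_mul, Real.norm_eq_abs, abs_of_pos (by positivity),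
          inv_mul_cancel₀ h0.ne'])
      rw [map_smul_eq_mul, Real.norm_eq_abs, abs_of_pos (by positivity)] at h
      calc ν x = η x * ((η x)⁻¹ * ν x) := by field_simp
        _ ≤ η x * 1 := mul_le_mul_of_nonneg_left h h0.le
        _ = η x := mul_one _
  have key : η ((ν s)⁻¹ • s) ≤ 1 := by
    rw [hseg]
    calc η (lam • ((ν s')⁻¹ • s') + (1 - lam) • ((ν s'')⁻¹ • s''))
        ≤ η (lam • ((ν s')⁻¹ • s')) + η ((1 - lam) • ((ν s'')⁻¹ • s'')) :=
          map_add_le_add η _ _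
      _ = ‖lam‖ * (‖(ν s')⁻¹‖ * η s') + ‖1 - lam‖ * (‖(ν s'')⁻¹‖ * η s'') := by
          rw [map_smul_eq_mul, map_smul_eq_mul, map_smul_eq_mul, map_smul_eq_mul]
      _ = 1 := by
          rw [Real.norm_eq_abs, Real.norm_eq_abs, Real.norm_eq_abs, Real.norm_eq_abs,
            abs_of_nonneg hlam0, abs_of_nonneg (by linarith : (0:ℝ) ≤ 1 - lam),
            abs_of_pos (inv_pos.2 hpos'), abs_of_pos (inv_pos.2 hpos''),
            h1', h2', inv_mul_cancel₀ hpos'.ne', inv_mul_cancel₀ hpos''.ne']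
          ring
  rw [map_smul_eq_mul, Real.norm_eq_abs, abs_of_pos (inv_pos.2 hpos)] at key
  have hηs : η s ≤ ν s := by
    have := (inv_mul_le_iff₀ hpos).mp key
    linarith
  exact le_antisymm (hle s) hηs
end

section
/- Let (l_i)_{i≥0} be independent ℕ-valued random variables with P(l_i ≥ l) ≤ e^{−c l} for all l ≥ 1 and some c > 0, and P(l_i = 0) ≥ ε > 0. Define the random set I = ⋃_{i=0}^{n+1} [i − l_i, i] ⊆ ℝ (sticks). Then there exist C' < ∞ and c' > 0, depending only on c and ε, such that P(I is connected, i.e., I ⊇ [0, n+1]) ≤ C' e^{−c' n}. -/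
/-!
Follow the grid points `k * D`, `k ≤ n / D`, and let `a k` be the probability that all grid points
from the `k`-th on are covered. The stick covering `k * D` lies in some block `(r * D, r * D + D]`
with `r ≥ k`, and is independent of the sticks beyond that block, which must cover the later grid
points; hence `a k ≤ ∑ r, P(block r covers k * D) * a (r + 1)`. Block `k` itself misses `k * D`
with probability at least `ε ^ R / 2`: its first `R` sticks may all have length zero, while the
later ones are unlikely to reach back. A block `r > k` covers `k * D` only through a stick of
length at least `(r - k) * D`, of probability `O(q ^ ((r - k) * D))` with `q = exp (-c)`. For `D`
large this renewal inequality forces `a` to decay geometrically in the number `n / D` of blocks.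
-/

open MeasureTheory ProbabilityTheory Filter Topology Finset

lemma sum_Ioc_pow_sub_le {q : ℝ} (hq0 : 0 ≤ q) (hq1 : q < 1) {a b d : ℕ} (hda : d ≤ a) :
    ∑ i ∈ Ioc a b, q ^ (i - d) ≤ q ^ (a + 1 - d) / (1 - q) := by
  have hshift : ∑ i ∈ Ioc a b, q ^ (i - d) = ∑ j ∈ Ico (a + 1 - d) (b + 1 - d), q ^ j :=
    sum_nbij' (· - d) (· + d) (fun i hi => by simp only [mem_Ioc, mem_Ico] at hi ⊢; omega)
      (fun j hj => by simp only [mem_Ioc, mem_Ico] at hj ⊢; omega)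
      (fun i hi => by simp only [mem_Ioc] at hi; omega) (fun _ _ => by omega) (fun _ _ => rfl)
  rw [hshift]
  exact geom_sum_Ico_le_of_lt_one hq0 hq1

section Renewal

variable {a : ℕ → ℝ} {b : ℕ → ℕ → ℝ} {δ θ : ℝ} {m : ℕ}

lemma sum_mul_pow_le_of_kernel_bound (hδ : δ ≤ 1) (hθ : 0 ≤ θ) (hθδ : 8 * θ ≤ δ)
    (hdiag : ∀ k, b k k ≤ 1 - δ) (hoff : ∀ k r, k < r → b k r ≤ θ ^ (r - k))
    {k : ℕ} (hk : k ≤ m) :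
    ∑ r ∈ Icc k m, b k r * (1 - δ / 2) ^ (m - r) ≤ (1 - δ / 2) ^ (m + 1 - k) := by
  set ρ := 1 - δ / 2 with hρ_def
  have hρ : 1 ≤ 2 * ρ := by linarith
  have hoff' : ∀ r ∈ Ioc k m, b k r * ρ ^ (m - r) ≤ (2 * θ) ^ (r - k) * ρ ^ (m - k) := by
    intro r hr
    rw [mem_Ioc] at hr
    calc b k r * ρ ^ (m - r) ≤ θ ^ (r - k) * ρ ^ (m - r) :=
          mul_le_mul_of_nonneg_right (hoff k r hr.1) (pow_nonneg (by linarith) _)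
      _ ≤ (2 * θ * ρ) ^ (r - k) * ρ ^ (m - r) := by
          gcongr
          · exact pow_nonneg (by linarith) _
          · nlinarith
      _ = (2 * θ) ^ (r - k) * ρ ^ (m - k) := by
          rw [mul_pow, mul_assoc, ← pow_add]; congr 2; omega
  have hgeom : ∑ r ∈ Ioc k m, (2 * θ) ^ (r - k) ≤ δ / 2 := by
    refine (sum_Ioc_pow_sub_le (by positivity) (by linarith) le_rfl).trans ?_
    rw [Nat.add_sub_cancel_left, pow_one, div_le_iff₀ (by linarith)]
    nlinarith
  have hρk : 0 ≤ ρ ^ (m - k) := pow_nonneg (by linarith) _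
  calc ∑ r ∈ Icc k m, b k r * ρ ^ (m - r)
      = b k k * ρ ^ (m - k) + ∑ r ∈ Ioc k m, b k r * ρ ^ (m - r) := by
        rw [← Ioc_insert_left hk, sum_insert (by simp)]
    _ ≤ (1 - δ) * ρ ^ (m - k) + ∑ r ∈ Ioc k m, (2 * θ) ^ (r - k) * ρ ^ (m - k) :=
        add_le_add (mul_le_mul_of_nonneg_right (hdiag k) hρk) (sum_le_sum hoff')
    _ ≤ (1 - δ) * ρ ^ (m - k) + δ / 2 * ρ ^ (m - k) := by
        rw [← sum_mul]; gcongr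
    _ = ρ ^ (m + 1 - k) := by rw [Nat.sub_add_comm hk, pow_succ]; ring

lemma le_pow_of_renewal_ineq (hδ : δ ≤ 1) (hθ : 0 ≤ θ) (hθδ : 8 * θ ≤ δ)
    (hb : ∀ k r, 0 ≤ b k r) (hdiag : ∀ k, b k k ≤ 1 - δ)
    (hoff : ∀ k r, k < r → b k r ≤ θ ^ (r - k)) (hlast : a (m + 1) ≤ 1)
    (hrec : ∀ k ≤ m, a k ≤ ∑ r ∈ Icc k m, b k r * a (r + 1)) {k : ℕ} (hk : k ≤ m + 1) :
    a k ≤ (1 - δ / 2) ^ (m + 1 - k) := by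
  induction k using Nat.strong_decreasing_induction with
  | base => exact ⟨m + 1, fun k hk hk' => absurd hk' (by omega)⟩
  | step k ih =>
    rcases hk.eq_or_lt with rfl | hk
    · simpa using hlast
    calc a k ≤ ∑ r ∈ Icc k m, b k r * a (r + 1) := hrec k (by omega)
      _ ≤ ∑ r ∈ Icc k m, b k r * (1 - δ / 2) ^ (m - r) := by
          refine sum_le_sum fun r hr => mul_le_mul_of_nonneg_left ?_ (hb k r)
          rw [mem_Icc] at hr
          simpa using ih (r + 1) (by omega) (by omega)
      _ ≤ (1 - δ / 2) ^ (m + 1 - k) :=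
          sum_mul_pow_le_of_kernel_bound hδ hθ hθδ hdiag hoff (by omega)

end Renewal

lemma exists_block_params {q ε : ℝ} (hq0 : 0 ≤ q) (hq1 : q < 1) (hε0 : 0 < ε) (hε1 : ε ≤ 1) :
    ∃ R D : ℕ, ∃ δ : ℝ, 0 < D ∧ 0 < δ ∧ δ ≤ 1 ∧ δ ≤ ε ^ R * (1 - q ^ (R + 1) / (1 - q)) ∧
      8 * (q ^ D / (1 - q)) ≤ δ := by
  have hlim : Tendsto (fun k : ℕ => q ^ k / (1 - q)) atTop (𝓝 0) := by
    simpa using (tendsto_pow_atTop_nhds_zero_of_lt_one hq0 hq1).div_const (1 - q)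
  obtain ⟨R, hR⟩ := eventually_atTop.1
    (hlim.eventually (ge_mem_nhds (by norm_num : (0 : ℝ) < 1 / 2)))
  have hεR : 0 < ε ^ R := pow_pos hε0 R
  obtain ⟨N, hN⟩ := eventually_atTop.1
    (hlim.eventually (ge_mem_nhds (by positivity : (0 : ℝ) < ε ^ R / 16)))
  refine ⟨R, N + 1, ε ^ R / 2, N.succ_pos, by positivity, ?_, ?_, ?_⟩
  · linarith [pow_le_one₀ hε0.le hε1 (n := R)]
  · nlinarith [hR (R + 1) (by omega)]
  · linarith [hN (N + 1) (by omega)]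

lemma pow_div_add_one_le_exp {ρ : ℝ} (hρ0 : 0 < ρ) (hρ1 : ρ ≤ 1) {D : ℕ} (hD : 0 < D) (n : ℕ) :
    ρ ^ (n / D + 1) ≤ Real.exp (-(-Real.log ρ / D * n)) := by
  have hlog : Real.log ρ ≤ 0 := Real.log_nonpos hρ0.le hρ1
  have hDpos : (0 : ℝ) < D := by exact_mod_cast hD
  have hn : (n : ℝ) / D ≤ ((n / D + 1 : ℕ) : ℝ) := by
    rw [div_le_iff₀ hDpos]
    exact_mod_cast (Nat.lt_div_mul_add hD).le.trans (by rw [add_mul, one_mul])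
  rw [← Real.exp_log (pow_pos hρ0 _), Real.log_pow]
  refine Real.exp_le_exp.2 ?_
  calc ((n / D + 1 : ℕ) : ℝ) * Real.log ρ ≤ (n / D) * Real.log ρ :=
        mul_le_mul_of_nonpos_right hn hlog
    _ = -(-Real.log ρ / D * n) := by ring

namespace StickPercolation

variable {Ω : Type*}

def coveredBy (l : ℕ → Ω → ℕ) (s : Finset ℕ) (x : ℕ) : Set Ω :=
  {ω | ∃ i ∈ s, x < i ∧ i ≤ x + l i ω}

abbrev sticksSigma (l : ℕ → Ω → ℕ) (S : Set ℕ) : MeasurableSpace Ω :=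
  ⨆ i ∈ S, MeasurableSpace.comap (l i) inferInstance

variable {l : ℕ → Ω → ℕ}

lemma measurableSet_sticksSigma_preimage {S : Set ℕ} {i : ℕ} (hi : i ∈ S) (t : Set ℕ) :
    MeasurableSet[sticksSigma l S] (l i ⁻¹' t) :=
  le_iSup₂ (f := fun i (_ : i ∈ S) => MeasurableSpace.comap (l i) inferInstance) i hi _
    ⟨t, .of_discrete, rfl⟩

lemma measurableSet_coveredBy {S : Set ℕ} {s : Finset ℕ} (hs : ↑s ⊆ S) (x : ℕ) :
    MeasurableSet[sticksSigma l S] (coveredBy l s x) := by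
  have : coveredBy l s x = ⋃ i ∈ s, l i ⁻¹' {v | x < i ∧ i ≤ x + v} := by
    ext ω; simp only [coveredBy, Set.mem_ofPred_eq, Set.mem_iUnion, Set.mem_preimage, exists_prop]
  rw [this]
  exact Finset.measurableSet_biUnion s fun i hi => measurableSet_sticksSigma_preimage (hs hi) _

def gridCovered (l : ℕ → Ω → ℕ) (D n k : ℕ) : Set Ω :=
  {ω | ∀ j ∈ Icc k (n / D), ω ∈ coveredBy l (Ioc (j * D) (n + 1)) (j * D)}

lemma measurableSet_gridCovered (D n k : ℕ) :
    MeasurableSet[sticksSigma l (Set.Ioi (k * D))] (gridCovered l D n k) := by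
  have : gridCovered l D n k = ⋂ j ∈ Icc k (n / D), coveredBy l (Ioc (j * D) (n + 1)) (j * D) := by
    ext ω; simp [gridCovered]
  rw [this]
  refine Finset.measurableSet_biInter _ fun j hj => measurableSet_coveredBy (fun i hi => ?_) _
  simp only [mem_Icc, coe_Ioc, Set.mem_Ioc] at hj hi
  exact lt_of_le_of_lt (Nat.mul_le_mul_right D hj.1) hi.1

lemma gridCovered_subset_iUnion {D n k : ℕ} (hD : 0 < D) (hk : k ≤ n / D) :
    gridCovered l D n k ⊆ ⋃ r ∈ Icc k (n / D),
      coveredBy l (Ioc (r * D) (r * D + D)) (k * D) ∩ gridCovered l D n (r + 1) := by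
  intro ω hω
  obtain ⟨i, hi, hki, hcov⟩ := hω k (mem_Icc.2 ⟨le_rfl, hk⟩)
  rw [mem_Ioc] at hi
  have hlo := Nat.div_mul_le_self (i - 1) D
  have hhi := Nat.lt_div_mul_add (a := i - 1) hD
  have hkr : k ≤ (i - 1) / D := (Nat.le_div_iff_mul_le hD).2 (by omega)
  refine Set.mem_biUnion (mem_Icc.2 ⟨hkr, Nat.div_le_div_right (by omega)⟩)
    ⟨⟨i, mem_Ioc.2 ⟨by omega, by omega⟩, hki, hcov⟩, fun j hj => hω j ?_⟩
  rw [mem_Icc] at hj ⊢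
  omega

lemma setOf_connected_subset_gridCovered (D n : ℕ) :
    {ω | ∀ j ≤ n, ∃ i ≤ n + 1, j < i ∧ i ≤ j + l i ω} ⊆ gridCovered l D n 0 := by
  intro ω hω j hj
  have hjn : j * D ≤ n := (Nat.mul_le_mul_right D (mem_Icc.1 hj).2).trans (Nat.div_mul_le_self n D)
  obtain ⟨i, hi, hji, hcov⟩ := hω (j * D) hjn
  exact ⟨i, mem_Ioc.2 ⟨hji, hi⟩, hji, hcov⟩

variable [MeasurableSpace Ω] {μ : Measure Ω} {ε : ℝ}

lemma sticksSigma_le (hml : ∀ i, Measurable (l i)) (S : Set ℕ) :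
    sticksSigma l S ≤ ‹MeasurableSpace Ω› :=
  iSup₂_le fun i _ => (hml i).comap_le

lemma measureReal_inter_eq_mul_of_disjoint (hind : iIndepFun l μ) (hml : ∀ i, Measurable (l i))
    {S T : Set ℕ} (hST : Disjoint S T) {A B : Set Ω} (hA : MeasurableSet[sticksSigma l S] A)
    (hB : MeasurableSet[sticksSigma l T] B) : μ.real (A ∩ B) = μ.real A * μ.real B := by
  have := indep_iSup_of_disjoint (fun i => (hml i).comap_le)
    ((iIndepFun_iff_iIndep _ _ _).1 hind) hST
  simp only [Measure.real, (Indep_iff _ _ _).1 this A B hA hB, ENNReal.toReal_mul]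

lemma pow_card_le_measureReal_forall_eq_zero (hind : iIndepFun l μ) (hε : 0 ≤ ε)
    (hatom : ∀ i, ε ≤ μ.real {ω | l i ω = 0}) (s : Finset ℕ) :
    ε ^ s.card ≤ μ.real {ω | ∀ i ∈ s, l i ω = 0} := by
  have hset : {ω | ∀ i ∈ s, l i ω = 0} = ⋂ i ∈ s, l i ⁻¹' {0} := by ext ω; simp
  have hprod : μ.real (⋂ i ∈ s, l i ⁻¹' {0}) = ∏ i ∈ s, μ.real {ω | l i ω = 0} := by
    simp only [Measure.real, ← ENNReal.toReal_prod,
      hind.measure_inter_preimage_eq_mul s (sets := fun _ => {0}) (fun _ _ => .of_discrete)]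
    rfl
  rw [hset, hprod, ← prod_const]
  exact prod_le_prod (fun _ _ => hε) fun i _ => hatom i

variable [IsProbabilityMeasure μ] {q : ℝ}

lemma measureReal_coveredBy_Ioc_le (hq0 : 0 ≤ q) (hq1 : q < 1)
    (htail : ∀ i k, 1 ≤ k → μ.real {ω | k ≤ l i ω} ≤ q ^ k) {x a : ℕ} (hxa : x ≤ a) (b : ℕ) :
    μ.real (coveredBy l (Ioc a b) x) ≤ q ^ (a + 1 - x) / (1 - q) := by
  have hsub : coveredBy l (Ioc a b) x ⊆ ⋃ i ∈ Ioc a b, {ω | i - x ≤ l i ω} := by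
    rintro ω ⟨i, hi, -, hcov⟩
    exact Set.mem_biUnion hi (by simp only [Set.mem_ofPred_eq]; omega)
  calc μ.real (coveredBy l (Ioc a b) x)
      ≤ ∑ i ∈ Ioc a b, μ.real {ω | i - x ≤ l i ω} :=
        (measureReal_mono hsub (measure_ne_top _ _)).trans (measureReal_biUnion_finset_le _ _)
    _ ≤ ∑ i ∈ Ioc a b, q ^ (i - x) :=
        sum_le_sum fun i hi => htail i _ (by rw [mem_Ioc] at hi; omega)
    _ ≤ q ^ (a + 1 - x) / (1 - q) := sum_Ioc_pow_sub_le hq0 hq1 hxa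

/-- A block of `D` sticks just right of `x` leaves `x` uncovered when its first `R` sticks have
length zero and none of the remaining ones is long enough to reach `x`. -/
lemma measureReal_coveredBy_Ioc_self_le (hind : iIndepFun l μ) (hml : ∀ i, Measurable (l i))
    (hq0 : 0 ≤ q) (hq1 : q < 1) (htail : ∀ i k, 1 ≤ k → μ.real {ω | k ≤ l i ω} ≤ q ^ k)
    (hε : 0 ≤ ε) (hatom : ∀ i, ε ≤ μ.real {ω | l i ω = 0}) (R D x : ℕ) :
    μ.real (coveredBy l (Ioc x (x + D)) x) ≤ 1 - ε ^ R * (1 - q ^ (R + 1) / (1 - q)) := by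
  set Z := {ω | ∀ i ∈ Ioc x (x + R), l i ω = 0}
  set V := coveredBy l (Ioc (x + R) (x + D)) x
  have hZ : ε ^ R ≤ μ.real Z := by
    have := pow_card_le_measureReal_forall_eq_zero hind hε hatom (Ioc x (x + R))
    rwa [Nat.card_Ioc, Nat.add_sub_cancel_left] at this
  have hVmeas : MeasurableSet[sticksSigma l ↑(Ioc (x + R) (x + D))] V :=
    measurableSet_coveredBy subset_rfl x
  have hV : 1 - q ^ (R + 1) / (1 - q) ≤ μ.real Vᶜ := by
    have := measureReal_coveredBy_Ioc_le hq0 hq1 htail (Nat.le_add_right x R) (x + D) (μ := μ)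
    rw [show x + R + 1 - x = R + 1 by omega] at this
    rw [probReal_compl_eq_one_sub (sticksSigma_le hml _ _ hVmeas)]
    linarith
  have hZmeas : MeasurableSet[sticksSigma l ↑(Ioc x (x + R))] Z := by
    have : Z = ⋂ i ∈ Ioc x (x + R), l i ⁻¹' {0} := by ext ω; simp [Z]
    rw [this]
    exact Finset.measurableSet_biInter _ fun i hi => measurableSet_sticksSigma_preimage hi _
  have hdisj : Disjoint (↑(Ioc x (x + R)) : Set ℕ) ↑(Ioc (x + R) (x + D)) := by
    rw [Finset.disjoint_coe, Finset.disjoint_left]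
    intro i h1 h2
    simp only [mem_Ioc] at h1 h2
    omega
  have hZV : μ.real (Z ∩ Vᶜ) = μ.real Z * μ.real Vᶜ :=
    measureReal_inter_eq_mul_of_disjoint hind hml hdisj hZmeas hVmeas.compl
  have hsub : Z ∩ Vᶜ ⊆ (coveredBy l (Ioc x (x + D)) x)ᶜ := by
    rintro ω ⟨hz, hv⟩ ⟨i, hi, hxi, hcov⟩
    rw [mem_Ioc] at hi
    by_cases hiR : i ≤ x + R
    · have := hz i (mem_Ioc.2 ⟨hi.1, hiR⟩); omega
    · exact hv ⟨i, mem_Ioc.2 ⟨by omega, hi.2⟩, hxi, hcov⟩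
  have hcov : MeasurableSet (coveredBy l (Ioc x (x + D)) x) :=
    sticksSigma_le hml _ _ (measurableSet_coveredBy (S := Set.univ) (Set.subset_univ _) x)
  calc μ.real (coveredBy l (Ioc x (x + D)) x)
      = 1 - μ.real (coveredBy l (Ioc x (x + D)) x)ᶜ := by
        rw [probReal_compl_eq_one_sub hcov]; ring
    _ ≤ 1 - μ.real (Z ∩ Vᶜ) := sub_le_sub_left (measureReal_mono hsub) 1
    _ ≤ 1 - ε ^ R * (1 - q ^ (R + 1) / (1 - q)) := by
        rw [hZV]
        exact sub_le_sub_left (mul_le_mul_of_nonneg hZ hV (by positivity) measureReal_nonneg) 1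

lemma measureReal_gridCovered_le (hind : iIndepFun l μ) (hml : ∀ i, Measurable (l i))
    {D n k : ℕ} (hD : 0 < D) (hk : k ≤ n / D) :
    μ.real (gridCovered l D n k) ≤ ∑ r ∈ Icc k (n / D),
      μ.real (coveredBy l (Ioc (r * D) (r * D + D)) (k * D)) *
        μ.real (gridCovered l D n (r + 1)) := by
  refine (measureReal_mono (gridCovered_subset_iUnion hD hk) (measure_ne_top _ _)).trans
    ((measureReal_biUnion_finset_le _ _).trans_eq (sum_congr rfl fun r _ => ?_))
  have hdisj : Disjoint (↑(Ioc (r * D) (r * D + D)) : Set ℕ) (Set.Ioi ((r + 1) * D)) := by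
    rw [Set.disjoint_left]
    intro i h1 h2
    simp only [coe_Ioc, Set.mem_Ioc, Set.mem_Ioi, add_mul, one_mul] at h1 h2
    omega
  exact measureReal_inter_eq_mul_of_disjoint hind hml hdisj (measurableSet_coveredBy subset_rfl _)
    (measurableSet_gridCovered D n (r + 1))

lemma measureReal_gridCovered_zero_le (hind : iIndepFun l μ) (hml : ∀ i, Measurable (l i))
    (hq0 : 0 ≤ q) (hq1 : q < 1) (htail : ∀ i k, 1 ≤ k → μ.real {ω | k ≤ l i ω} ≤ q ^ k)
    (hε : 0 ≤ ε) (hatom : ∀ i, ε ≤ μ.real {ω | l i ω = 0}) {R D : ℕ} {δ : ℝ} (hD : 0 < D)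
    (hδ1 : δ ≤ 1) (hδR : δ ≤ ε ^ R * (1 - q ^ (R + 1) / (1 - q)))
    (hδD : 8 * (q ^ D / (1 - q)) ≤ δ) (n : ℕ) :
    μ.real (gridCovered l D n 0) ≤ (1 - δ / 2) ^ (n / D + 1) := by
  have hq : 0 < 1 - q := by linarith
  have hoff : ∀ k r, k < r → μ.real (coveredBy l (Ioc (r * D) (r * D + D)) (k * D)) ≤
      (q ^ D / (1 - q)) ^ (r - k) := by
    intro k r hkr
    refine (measureReal_coveredBy_Ioc_le hq0 hq1 htail (Nat.mul_le_mul_right D hkr.le) _).trans ?_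
    have hexp : (r - k) * D ≤ r * D + 1 - k * D := by rw [Nat.sub_mul]; omega
    calc q ^ (r * D + 1 - k * D) / (1 - q) ≤ (q ^ D) ^ (r - k) / (1 - q) := by
          rw [← pow_mul, mul_comm D]
          exact div_le_div_of_nonneg_right (pow_le_pow_of_le_one hq0 hq1.le hexp) hq.le
      _ ≤ (q ^ D) ^ (r - k) / (1 - q) ^ (r - k) := by
          gcongr
          exact pow_le_of_le_one hq.le (by linarith) (by omega)
      _ = (q ^ D / (1 - q)) ^ (r - k) := (div_pow _ _ _).symm
  simpa using le_pow_of_renewal_ineq (a := fun k => μ.real (gridCovered l D n k))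
    (b := fun k r => μ.real (coveredBy l (Ioc (r * D) (r * D + D)) (k * D))) hδ1
    (by positivity) hδD (fun _ _ => measureReal_nonneg)
    (fun k => (measureReal_coveredBy_Ioc_self_le hind hml hq0 hq1 htail hε hatom R D (k * D)).trans
      (by linarith)) hoff measureReal_le_one
    (fun k hk => measureReal_gridCovered_le hind hml hD hk) (Nat.zero_le _)

end StickPercolation

open StickPercolation

/-- one-dimensional stick percolation. Independent ℕ-valued
random variables `l_i ≤ i` with uniform exponential tails and a uniform atom
at `0` have exponentially small probability of the sticks
`⋃_i [i - l_i, i]` covering all of `[0, n+1]`. -/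
theorem stick_percolation_connected_bound (c ε : ℝ) (hc : 0 < c) (hε : 0 < ε) :
    ∃ C' > (0 : ℝ), ∃ c' > (0 : ℝ),
      ∀ (Ω : Type) [MeasurableSpace Ω] (μ : Measure Ω)
        [IsProbabilityMeasure μ] (l : ℕ → Ω → ℕ),
        (∀ i, Measurable (l i)) →
        iIndepFun l μ →
        (∀ i ω, l i ω ≤ i) →
        (∀ i, ∀ k : ℕ, 1 ≤ k → (μ {ω | k ≤ l i ω}).toReal ≤ Real.exp (-(c * k))) →
        (∀ i, ε ≤ (μ {ω | l i ω = 0}).toReal) →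
        ∀ n : ℕ,
          (μ {ω | ∀ j ≤ n, ∃ i ≤ n + 1, j < i ∧ i ≤ j + l i ω}).toReal ≤
            C' * Real.exp (-(c' * n)) := by
  have hq0 : 0 ≤ Real.exp (-c) := (Real.exp_pos _).le
  have hq1 : Real.exp (-c) < 1 := Real.exp_lt_one_iff.2 (by linarith)
  -- `ε ≤ 1` would follow from `hatom`, but the constants must be chosen before the law is.
  obtain ⟨R, D, δ, hD, hδ0, hδ1, hδR, hδD⟩ :=
    exists_block_params hq0 hq1 (lt_min hε one_pos) (min_le_right ε 1)
  have hρ0 : 0 < 1 - δ / 2 := by linarith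
  have hρ1 : 1 - δ / 2 < 1 := by linarith
  refine ⟨1, one_pos, -Real.log (1 - δ / 2) / D,
    div_pos (neg_pos.2 (Real.log_neg hρ0 hρ1)) (by exact_mod_cast hD), ?_⟩
  intro Ω _ μ _ l hml hind _ htail hatom n
  have htail' : ∀ i k, 1 ≤ k → μ.real {ω | k ≤ l i ω} ≤ Real.exp (-c) ^ k := fun i k hk => by
    have h := htail i k hk
    rwa [show -(c * k) = k * -c by ring, Real.exp_nat_mul] at h
  calc μ.real {ω | ∀ j ≤ n, ∃ i ≤ n + 1, j < i ∧ i ≤ j + l i ω}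
      ≤ μ.real (gridCovered l D n 0) := measureReal_mono (setOf_connected_subset_gridCovered D n)
    _ ≤ (1 - δ / 2) ^ (n / D + 1) :=
        measureReal_gridCovered_zero_le hind hml hq0 hq1 htail' (le_min hε.le zero_le_one)
          (fun i => (min_le_left _ _).trans (hatom i)) hD hδ1 hδR hδD n
    _ ≤ 1 * Real.exp (-(-Real.log (1 - δ / 2) / D * n)) := by
        rw [one_mul]; exact pow_div_add_one_le_exp hρ0 hρ1.le hD n
end

section
/- Let D be a positive-definite symmetric d×d real matrix, μ ∈ ℝ^d nonzero, and define f(k, n) = k^{−d/2} exp(−((n−k)²/k) · (μ·D^{−1}μ)/2) for k, n ≥ 1. Then ∑_{k : |k−n| ≤ n^{1/2} (log n)^2} f(k, n) = (1 + o(1)) · n^{−(d−1)/2} · √(2π / (μ·D^{−1}μ)) as n → ∞. -/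
/-!
On the window `|k - n| ≤ M` with `M = o(n)`, the summand `k^{-p} e^{-α (n-k)²/(2k)}` is pinched
between `(n ± M)^{-p} e^{-α (n-k)²/(2(n ∓ M))}`, so the sum is pinched between multiples of the
discrete Gaussian sums `Θ_c(m) = ∑_{|j| ≤ m} e^{-c j²}` with `c ~ α/(2n)` and `m = ⌊M⌋`.
Comparing with `∫ e^{-c x²}` gives `√(π/c) - 1 - 2/(c(m+1)) ≤ Θ_c(m) ≤ √(π/c) + 1`; as `c → 0`
and `c m² → ∞` (this is `M²/n → ∞`), both sides are `√(π/c) (1 + o(1)) = √(2πn/α) (1 + o(1))`.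
-/

open scoped Classical
open Matrix Filter
open Real Finset MeasureTheory Topology

lemma integral_Ioi_exp_neg_mul_sq_le {c R : ℝ} (hc : 0 < c) (hR : 0 < R) :
    ∫ x in Set.Ioi R, exp (-c * x ^ 2) ≤ 1 / (c * R) := by
  have hcR : 0 < c * R := mul_pos hc hR
  calc ∫ x in Set.Ioi R, exp (-c * x ^ 2) ≤ ∫ x in Set.Ioi R, exp (-(c * R) * x) := by
        refine setIntegral_mono_on (integrable_exp_neg_mul_sq hc).integrableOn
          (integrableOn_exp_mul_Ioi (neg_neg_of_pos hcR) R) measurableSet_Ioi fun x hx => ?_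
        have hx : R < x := hx
        exact exp_le_exp.2 (by nlinarith [mul_pos (mul_pos hc (hR.trans hx)) (sub_pos.2 hx)])
    _ = exp (-(c * R) * R) / (c * R) := by
        rw [integral_exp_mul_Ioi (neg_neg_of_pos hcR)]; ring
    _ ≤ 1 / (c * R) := by
        gcongr
        exact exp_le_one_iff.2 (by nlinarith)

lemma antitoneOn_exp_neg_mul_sq {c : ℝ} (hc : 0 ≤ c) :
    AntitoneOn (fun x : ℝ => exp (-c * x ^ 2)) (Set.Ici 0) := by
  intro x hx y _ hxy
  have : x ^ 2 ≤ y ^ 2 := pow_le_pow_left₀ hx hxy 2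
  exact exp_le_exp.2 (by nlinarith)

lemma sum_range_exp_neg_mul_sq_le {c : ℝ} (hc : 0 < c) (m : ℕ) :
    ∑ j ∈ range (m + 1), exp (-c * (j : ℝ) ^ 2) ≤ 1 + √(π / c) / 2 := by
  have hsum : ∑ i ∈ range m, exp (-c * ((i + 1 : ℕ) : ℝ) ^ 2) ≤
      ∫ x in (0 : ℝ)..m, exp (-c * x ^ 2) := by
    simpa using ((antitoneOn_exp_neg_mul_sq hc.le).mono Set.Icc_subset_Ici_self).sum_le_integral
      (x₀ := 0) (a := m)
  have hint : ∫ x in (0 : ℝ)..m, exp (-c * x ^ 2) ≤ ∫ x in Set.Ioi 0, exp (-c * x ^ 2) := by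
    rw [intervalIntegral.integral_of_le m.cast_nonneg]
    exact setIntegral_mono_set (integrable_exp_neg_mul_sq hc).integrableOn
      (.of_forall fun x => (exp_pos _).le) Set.Ioc_subset_Ioi_self.eventuallyLE
  rw [integral_gaussian_Ioi] at hint
  rw [sum_range_succ', Nat.cast_zero, zero_pow two_ne_zero, mul_zero, exp_zero]
  linarith

lemma le_sum_range_exp_neg_mul_sq {c : ℝ} (hc : 0 < c) {N : ℕ} (hN : 0 < N) :
    √(π / c) / 2 - 1 / (c * N) ≤ ∑ j ∈ range N, exp (-c * (j : ℝ) ^ 2) := by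
  have hsum := ((antitoneOn_exp_neg_mul_sq hc.le).mono Set.Icc_subset_Ici_self).integral_le_sum
    (x₀ := 0) (a := N)
  have hsplit := intervalIntegral.integral_interval_add_Ioi (μ := volume) (a := 0) (b := N)
    (integrable_exp_neg_mul_sq hc).integrableOn (integrable_exp_neg_mul_sq hc).integrableOn
  have htail := integral_Ioi_exp_neg_mul_sq_le hc (Nat.cast_pos.2 hN)
  rw [integral_gaussian_Ioi] at hsplit
  simp only [zero_add] at hsum
  linarith

lemma sum_Icc_sub_add_of_even {h : ℝ → ℝ} (he : Function.Even h) {m n : ℕ} (hmn : m ≤ n) :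
    ∑ k ∈ Icc (n - m) (n + m), h ((n : ℝ) - k) = 2 * ∑ j ∈ range (m + 1), h j - h 0 := by
  induction m with
  | zero =>
    simp only [tsub_zero, add_zero, Icc_self, sum_singleton, sub_self, zero_add, range_one,
      Nat.cast_zero]
    ring
  | succ m ih =>
    rw [← Finset.insert_Icc_add_one_left_eq_Icc (by omega), sum_insert (by simp),
      show n - (m + 1) + 1 = n - m by omega, ← add_assoc, sum_Icc_succ_top (by omega),
      ih (by omega), sum_range_succ _ (m + 1)]
    have h1 : (n : ℝ) - ((n - (m + 1) : ℕ) : ℝ) = (m + 1 : ℕ) := by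
      rw [Nat.cast_sub hmn]; ring
    have h2 : (n : ℝ) - ((n + m + 1 : ℕ) : ℝ) = -((m + 1 : ℕ) : ℝ) := by push_cast; ring
    rw [h1, h2, he]
    ring

lemma one_le_and_abs_sub_le_iff_mem_Icc {M : ℝ} (hM : 0 ≤ M) {n k : ℕ} (hn : ⌊M⌋₊ < n) :
    (1 ≤ k ∧ |(k : ℝ) - n| ≤ M) ↔ k ∈ Icc (n - ⌊M⌋₊) (n + ⌊M⌋₊) := by
  have hfloor_le := Nat.floor_le hM
  have hlt_floor := Nat.lt_floor_add_one M
  rw [mem_Icc, abs_le]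
  constructor
  · rintro ⟨-, hlo, hhi⟩
    have hk : (k : ℝ) < n + ⌊M⌋₊ + 1 := by linarith
    have hn : (n : ℝ) < k + ⌊M⌋₊ + 1 := by linarith
    have hk' : k < n + ⌊M⌋₊ + 1 := by exact_mod_cast hk
    have hn' : n < k + ⌊M⌋₊ + 1 := by exact_mod_cast hn
    omega
  · rintro ⟨hlo, hhi⟩
    have hk : (k : ℝ) ≤ n + ⌊M⌋₊ := by exact_mod_cast hhi
    have hn : (n : ℝ) ≤ k + ⌊M⌋₊ := by exact_mod_cast (by omega : n ≤ k + ⌊M⌋₊)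
    exact ⟨by omega, by linarith, by linarith⟩

lemma tsum_ite_abs_sub_le_eq_sum_Icc (g : ℕ → ℝ) {M : ℝ} (hM : 0 ≤ M) {n : ℕ} (hn : ⌊M⌋₊ < n) :
    ∑' k : ℕ, (if 1 ≤ k ∧ |(k : ℝ) - n| ≤ M then g k else 0) =
      ∑ k ∈ Icc (n - ⌊M⌋₊) (n + ⌊M⌋₊), g k := by
  simp only [one_le_and_abs_sub_le_iff_mem_Icc hM hn]
  rw [tsum_eq_sum fun k hk => if_neg hk]
  exact sum_congr rfl fun k hk => if_pos hk

lemma rpow_neg_mul_exp_le {p α a b x k : ℝ} (hp : 0 ≤ p) (hα : 0 ≤ α) (ha : 0 < a)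
    (hak : a ≤ k) (hkb : k ≤ b) :
    k ^ (-p) * exp (-((x - k) ^ 2 / k) * α / 2) ≤
      a ^ (-p) * exp (-(α / (2 * b)) * (x - k) ^ 2) := by
  have hk : 0 < k := ha.trans_le hak
  gcongr ?_ * exp ?_
  · exact rpow_le_rpow_of_nonpos ha hak (neg_nonpos.2 hp)
  · have : α / (2 * b) ≤ α / (2 * k) := by gcongr
    have hq := sq_nonneg (x - k)
    have : -((x - k) ^ 2 / k) * α / 2 = -(α / (2 * k)) * (x - k) ^ 2 := by field_simp
    nlinarith

lemma le_rpow_neg_mul_exp {p α a b x k : ℝ} (hp : 0 ≤ p) (hα : 0 ≤ α) (ha : 0 < a)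
    (hak : a ≤ k) (hkb : k ≤ b) :
    b ^ (-p) * exp (-(α / (2 * a)) * (x - k) ^ 2) ≤
      k ^ (-p) * exp (-((x - k) ^ 2 / k) * α / 2) := by
  have hk : 0 < k := ha.trans_le hak
  gcongr ?_ * exp ?_
  · exact rpow_le_rpow_of_nonpos hk hkb (neg_nonpos.2 hp)
  · have : α / (2 * k) ≤ α / (2 * a) := by gcongr
    have hq := sq_nonneg (x - k)
    have : -((x - k) ^ 2 / k) * α / 2 = -(α / (2 * k)) * (x - k) ^ 2 := by field_simp
    nlinarith

/-- `∑_{|j| ≤ m} e^{-c j²}`, folded by the symmetry `j ↦ -j`. -/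
noncomputable def gaussWindowSum (c : ℝ) (m : ℕ) : ℝ :=
  2 * ∑ j ∈ range (m + 1), exp (-c * (j : ℝ) ^ 2) - 1

lemma gaussWindowSum_le {c : ℝ} (hc : 0 < c) (m : ℕ) : gaussWindowSum c m ≤ 1 + √(π / c) := by
  have := sum_range_exp_neg_mul_sq_le hc m
  rw [gaussWindowSum]
  linarith

lemma le_gaussWindowSum {c : ℝ} (hc : 0 < c) (m : ℕ) :
    √(π / c) - 1 - 2 / (c * (m + 1)) ≤ gaussWindowSum c m := by
  have := le_sum_range_exp_neg_mul_sq hc (N := m + 1) (by positivity)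
  rw [gaussWindowSum]
  push_cast at this
  linarith [mul_one_div (2 : ℝ) (c * (m + 1))]

lemma sum_Icc_exp_neg_mul_sq_eq_gaussWindowSum (c : ℝ) {m n : ℕ} (hmn : m ≤ n) :
    ∑ k ∈ Icc (n - m) (n + m), exp (-c * ((n : ℝ) - k) ^ 2) = gaussWindowSum c m := by
  have he : Function.Even fun x : ℝ => exp (-c * x ^ 2) := fun x => by simp only [neg_sq]
  simpa [gaussWindowSum] using sum_Icc_sub_add_of_even he hmn

lemma tendsto_sqrt_mul_gaussWindowSum {ι : Type*} {l : Filter ι} {c : ι → ℝ} {m : ι → ℕ}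
    (hc : Tendsto c l (𝓝[>] 0)) (hcm : Tendsto (fun i => c i * ((m i : ℝ) + 1) ^ 2) l atTop) :
    Tendsto (fun i => √(c i / π) * gaussWindowSum (c i) (m i)) l (𝓝 1) := by
  obtain ⟨hc0, hcpos⟩ := tendsto_nhdsWithin_iff.1 hc
  have ht : Tendsto (fun i => √(c i / π)) l (𝓝 0) := by
    simpa using (hc0.div_const π).sqrt
  have hu : Tendsto (fun i => (√(π * (c i * ((m i : ℝ) + 1) ^ 2)))⁻¹) l (𝓝 0) :=
    tendsto_inv_atTop_zero.comp (tendsto_sqrt_atTop.comp (hcm.const_mul_atTop pi_pos))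
  have hlo := (tendsto_const_nhds (x := (1 : ℝ))).sub (ht.add (hu.const_mul 2))
  have hhi := ht.add (tendsto_const_nhds (x := (1 : ℝ)))
  simp only [zero_add, add_zero, mul_zero, sub_zero] at hlo hhi
  refine tendsto_of_tendsto_of_tendsto_of_le_of_le' hlo hhi ?_ ?_ <;>
    filter_upwards [hcpos] with i (hci : 0 < c i)
  · have hmi : (0 : ℝ) < m i + 1 := by positivity
    have hroot : √(c i / π) * √(π / c i) = 1 := by
      rw [← sqrt_mul (by positivity), div_mul_div_comm, mul_comm, div_self (by positivity),
        sqrt_one]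
    have herr : √(c i / π) * (2 / (c i * (m i + 1))) =
        2 * (√(π * (c i * ((m i : ℝ) + 1) ^ 2)))⁻¹ := by
      rw [sqrt_div hci.le, sqrt_mul pi_pos.le, sqrt_mul hci.le, sqrt_sq hmi.le]
      have := sq_sqrt hci.le
      have := sqrt_pos.2 hci
      have := sqrt_pos.2 pi_pos
      field_simp
      linarith
    calc 1 - (√(c i / π) + 2 * (√(π * (c i * ((m i : ℝ) + 1) ^ 2)))⁻¹)
        = √(c i / π) * (√(π / c i) - 1 - 2 / (c i * (m i + 1))) := by
          rw [mul_sub, mul_sub, hroot, herr]; ring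
      _ ≤ _ := by gcongr; exact le_gaussWindowSum hci (m i)
  · calc √(c i / π) * gaussWindowSum (c i) (m i) ≤ √(c i / π) * (1 + √(π / c i)) := by
          gcongr; exact gaussWindowSum_le hci (m i)
      _ = √(c i / π) + 1 := by
          rw [mul_add, mul_one, ← sqrt_mul (by positivity), div_mul_div_comm, mul_comm (c i),
            div_self (by positivity), sqrt_one]

noncomputable def ozWindowSum (α p M : ℝ) (n : ℕ) : ℝ :=
  ∑' k : ℕ, if 1 ≤ k ∧ |(k : ℝ) - n| ≤ M then
    (k : ℝ) ^ (-p) * exp (-(((n : ℝ) - k) ^ 2 / k) * α / 2) else 0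

lemma ozWindowSum_mem_Icc {α p M : ℝ} (hα : 0 ≤ α) (hp : 0 ≤ p) (hM : 0 ≤ M) {n : ℕ}
    (hMn : M < n) :
    ozWindowSum α p M n ∈ Set.Icc
      ((n + M) ^ (-p) * gaussWindowSum (α / (2 * (n - M))) ⌊M⌋₊)
      ((n - M) ^ (-p) * gaussWindowSum (α / (2 * (n + M))) ⌊M⌋₊) := by
  have hfloor : ⌊M⌋₊ < n := (Nat.floor_lt hM).2 hMn
  have hbounds : ∀ k ∈ Icc (n - ⌊M⌋₊) (n + ⌊M⌋₊), (n : ℝ) - M ≤ k ∧ (k : ℝ) ≤ n + M := by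
    intro k hk
    obtain ⟨-, hk⟩ := (one_le_and_abs_sub_le_iff_mem_Icc hM hfloor).2 hk
    rw [abs_le] at hk
    constructor <;> linarith
  rw [ozWindowSum, tsum_ite_abs_sub_le_eq_sum_Icc _ hM hfloor,
    ← sum_Icc_exp_neg_mul_sq_eq_gaussWindowSum _ hfloor.le,
    ← sum_Icc_exp_neg_mul_sq_eq_gaussWindowSum _ hfloor.le, mul_sum, mul_sum]
  constructor <;> refine sum_le_sum fun k hk => ?_
  · exact le_rpow_neg_mul_exp hp hα (by linarith) (hbounds k hk).1 (hbounds k hk).2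
  · exact rpow_neg_mul_exp_le hp hα (by linarith) (hbounds k hk).1 (hbounds k hk).2

lemma tendsto_rpow_neg_mul_gaussWindowSum_div {α p : ℝ} (hα : 0 < α) {a b : ℕ → ℝ}
    {m : ℕ → ℕ} (ha : Tendsto (fun n => a n / n) atTop (𝓝 1))
    (hb : Tendsto (fun n => b n / n) atTop (𝓝 1))
    (hm : Tendsto (fun n => ((m n : ℝ) + 1) ^ 2 / n) atTop atTop) :
    Tendsto (fun n => a n ^ (-p) * gaussWindowSum (α / (2 * b n)) (m n) /
      ((n : ℝ) ^ (1 / 2 - p) * √(2 * π / α))) atTop (𝓝 1) := by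
  have hn : ∀ᶠ n : ℕ in atTop, (0 : ℝ) < n :=
    (eventually_gt_atTop 0).mono fun n hn => Nat.cast_pos.2 hn
  have hpos {f : ℕ → ℝ} (hf : Tendsto (fun n => f n / n) atTop (𝓝 1)) :
      ∀ᶠ n in atTop, 0 < f n := by
    filter_upwards [hn, hf.eventually (lt_mem_nhds one_pos)] with n hn hfn
    exact (div_pos_iff_of_pos_right hn).1 hfn
  have hb_top : Tendsto b atTop atTop := by
    refine (tendsto_natCast_atTop_atTop.atTop_mul_pos one_pos hb).congr' ?_
    filter_upwards [hn] with n hn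
    field_simp
  have hc : Tendsto (fun n => α / (2 * b n)) atTop (𝓝[>] 0) := by
    refine tendsto_nhdsWithin_iff.2 ⟨?_, ?_⟩
    · exact tendsto_const_nhds.div_atTop (hb_top.const_mul_atTop two_pos)
    · filter_upwards [hpos hb] with n hbn
      exact div_pos hα (by positivity)
  have hcm : Tendsto (fun n => α / (2 * b n) * ((m n : ℝ) + 1) ^ 2) atTop atTop := by
    have hb_inv : Tendsto (fun n => (b n / n)⁻¹) atTop (𝓝 1) := by
      simpa using hb.inv₀ one_ne_zero
    refine ((hm.atTop_mul_pos one_pos hb_inv).const_mul_atTop (half_pos hα)).congr' ?_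
    filter_upwards [hn] with n hn
    field_simp
  -- `√(π/c) = √(2π/α) √b` for `c = α/(2b)`, so the ratio is `(a/n)^{-p} · √(b/n) · √(c/π) Θ_c(m)`.
  have hlim := ((ha.rpow_const (p := -p) (Or.inl one_ne_zero)).mul hb.sqrt).mul
    (tendsto_sqrt_mul_gaussWindowSum hc hcm)
  simp only [one_rpow, sqrt_one, one_mul] at hlim
  refine hlim.congr' ?_
  filter_upwards [hn, hpos ha, hpos hb] with n hn han hbn
  have hsqrt : √(b n / n) * √(α / (2 * b n) / π) = (√n * √(2 * π / α))⁻¹ := by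
    rw [← sqrt_mul (by positivity), ← sqrt_mul hn.le, ← sqrt_inv]
    congr 1
    field_simp
  have hrpow : (n : ℝ) ^ (1 / 2 - p) = √n * n ^ (-p) := by
    rw [sub_eq_add_neg, rpow_add hn, sqrt_eq_rpow]
  rw [div_rpow han.le hn.le, hrpow, mul_assoc, ← mul_assoc (√(b n / n)), hsqrt]
  have := (rpow_pos_of_pos hn (-p)).ne'
  have := (sqrt_pos.2 hn).ne'
  have := (sqrt_pos.2 (by positivity : 0 < 2 * π / α)).ne'
  field_simp

theorem tendsto_ozWindowSum_div {α p : ℝ} (hα : 0 < α) (hp : 0 ≤ p) {M : ℕ → ℝ}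
    (hM0 : ∀ n, 0 ≤ M n) (hM : Tendsto (fun n => M n / n) atTop (𝓝 0))
    (hM2 : Tendsto (fun n => M n ^ 2 / n) atTop atTop) :
    Tendsto (fun n => ozWindowSum α p (M n) n / ((n : ℝ) ^ (1 / 2 - p) * √(2 * π / α)))
      atTop (𝓝 1) := by
  have hn : ∀ᶠ n : ℕ in atTop, (0 : ℝ) < n :=
    (eventually_gt_atTop 0).mono fun n hn => Nat.cast_pos.2 hn
  have hshift (s : ℝ) : Tendsto (fun n : ℕ => ((n : ℝ) + s * M n) / n) atTop (𝓝 1) := by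
    have := tendsto_const_nhds (x := (1 : ℝ)).add (hM.const_mul s)
    rw [mul_zero, add_zero] at this
    refine this.congr' ?_
    filter_upwards [hn] with n hn
    field_simp
  have hm : Tendsto (fun n => ((⌊M n⌋₊ : ℝ) + 1) ^ 2 / n) atTop atTop := by
    refine tendsto_atTop_mono (fun n => ?_) hM2
    gcongr
    · exact hM0 n
    · exact (Nat.lt_floor_add_one _).le
  have hlo := tendsto_rpow_neg_mul_gaussWindowSum_div (p := p) hα (hshift 1) (hshift (-1)) hm
  have hhi := tendsto_rpow_neg_mul_gaussWindowSum_div (p := p) hα (hshift (-1)) (hshift 1) hm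
  simp only [one_mul, neg_one_mul, ← sub_eq_add_neg] at hlo hhi
  refine tendsto_of_tendsto_of_tendsto_of_le_of_le' hlo hhi ?_ ?_ <;>
    filter_upwards [hn, hM.eventually (gt_mem_nhds one_pos)] with n hn hMn <;>
    obtain ⟨hlower, hupper⟩ := ozWindowSum_mem_Icc hα.le hp (hM0 n) ((div_lt_one hn).1 hMn) <;>
    gcongr

theorem gaussian_sum_OZ_prefactor_general {d : ℕ}
    (D : Matrix (Fin d) (Fin d) ℝ) (hD : D.PosDef)
    (μ : Fin d → ℝ) (hμ : μ ≠ 0) :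
    Tendsto
      (fun n : ℕ =>
        (∑' k : ℕ,
          (if 1 ≤ k ∧ |(k : ℝ) - (n : ℝ)| ≤ Real.sqrt n * Real.log n ^ 2 then
            (k : ℝ) ^ (-(d : ℝ) / 2) *
              Real.exp (-(((n : ℝ) - (k : ℝ)) ^ 2 / (k : ℝ)) *
                (μ ⬝ᵥ D⁻¹.mulVec μ) / 2)
          else 0)) /
        ((n : ℝ) ^ (-((d : ℝ) - 1) / 2) *
          Real.sqrt (2 * Real.pi / (μ ⬝ᵥ D⁻¹.mulVec μ))))
      atTop (nhds 1) := by
  have hα : 0 < μ ⬝ᵥ D⁻¹ *ᵥ μ := by simpa using hD.inv.dotProduct_mulVec_pos hμ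
  have hlog : Tendsto (fun n : ℕ => log n ^ 2) atTop atTop :=
    (tendsto_pow_atTop two_ne_zero).comp (tendsto_log_atTop.comp tendsto_natCast_atTop_atTop)
  have hM : Tendsto (fun n : ℕ => √n * log n ^ 2 / n) atTop (𝓝 0) := by
    have := (isLittleO_log_rpow_rpow_atTop 2 one_half_pos).tendsto_div_nhds_zero.comp
      tendsto_natCast_atTop_atTop
    refine this.congr' ?_
    filter_upwards [eventually_gt_atTop 0] with n hn
    have := (sqrt_pos.2 (Nat.cast_pos.2 hn : (0 : ℝ) < n)).ne'
    rw [Function.comp_apply, rpow_two, ← sqrt_eq_rpow, div_eq_div_iff this (by positivity),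
      mul_right_comm, mul_self_sqrt n.cast_nonneg, mul_comm]
  have hM2 : Tendsto (fun n : ℕ => (√n * log n ^ 2) ^ 2 / n) atTop atTop := by
    refine (hlog.atTop_mul_atTop₀ hlog).congr' ?_
    filter_upwards [eventually_gt_atTop 0] with n hn
    rw [mul_pow, sq_sqrt n.cast_nonneg]
    field_simp
  convert tendsto_ozWindowSum_div hα (p := d / 2) (by positivity) (fun n => by positivity) hM hM2
    using 3 with n
  · simp only [ozWindowSum, neg_div]
  · ring_nf

/-- Gaussian summation behind the Ornstein–Zernike prefactor:
with `α = μ·D⁻¹μ` for a positive-definite `D` and `μ ≠ 0`,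
`∑_{k : |k-n| ≤ √n (log n)², k ≥ 1} k^{-d/2} e^{-((n-k)²/k) α/2}
  = (1+o(1)) n^{-(d-1)/2} √(2π/α)`. -/
theorem gaussian_sum_OZ_prefactor {d : ℕ} (hd : 0 < d)
    (D : Matrix (Fin d) (Fin d) ℝ) (hD : D.PosDef)
    (μ : Fin d → ℝ) (hμ : μ ≠ 0) :
    Tendsto
      (fun n : ℕ =>
        (∑' k : ℕ,
          (if 1 ≤ k ∧ |(k : ℝ) - (n : ℝ)| ≤ Real.sqrt n * Real.log n ^ 2 then
            (k : ℝ) ^ (-(d : ℝ) / 2) *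
              Real.exp (-(((n : ℝ) - (k : ℝ)) ^ 2 / (k : ℝ)) *
                (μ ⬝ᵥ D⁻¹.mulVec μ) / 2)
          else 0)) /
        ((n : ℝ) ^ (-((d : ℝ) - 1) / 2) *
          Real.sqrt (2 * Real.pi / (μ ⬝ᵥ D⁻¹.mulVec μ))))
      atTop (nhds 1) :=
  gaussian_sum_OZ_prefactor_general D hD μ hμ
end
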